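/- Let Ω be an arbitrary set. Then every 2-local inner derivation on the Lie algebra F(Ω, B_sk(H)) of all maps from Ω to B_sk(H) is an inner derivation: there exists ā ∈ F(Ω, B_sk(H)) such that Δ(x) = ā x - x ā for all x ∈ F(Ω, B_sk(H)). -/

import Mathlib

noncomputable section

open Complex ContinuousLinearMap

namespace TwoLocalSkew

set_option linter.unusedSectionVars false

variable {H : Type*} [NormedAddCommGroup H] [InnerProductSpace ℂ H] [CompleteSpace H]

local notation "⟪" x ", " y "⟫" => @inner ℂ _ _ x y

/-- rank one operator `x ↦ ⟪v, x⟫ • u`. -/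
def Rop (u v : H) : H →L[ℂ] H := (innerSL ℂ v).smulRight u

@[simp] lemma Rop_apply (u v x : H) : Rop u v x = ⟪v, x⟫ • u := rfl

def pOp (u v : H) : H →L[ℂ] H := Rop u v - Rop v u

def qOp (u v : H) : H →L[ℂ] H := I • (Rop u v + Rop v u)

def zOp (u : H) : H →L[ℂ] H := I • Rop u u

@[simp] lemma pOp_apply (u v x : H) : pOp u v x = ⟪v, x⟫ • u - ⟪u, x⟫ • v := rfl

@[simp] lemma qOp_apply (u v x : H) : qOp u v x = I • (⟪v, x⟫ • u + ⟪u, x⟫ • v) := rfl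

@[simp] lemma zOp_apply (u x : H) : zOp u x = I • (⟪u, x⟫ • u) := rfl

lemma skew_pOp (u v : H) : adjoint (pOp u v) = -(pOp u v) := by
  symm
  rw [eq_adjoint_iff]
  intro x y
  simp only [neg_apply, pOp_apply, inner_neg_left, inner_sub_left, inner_sub_right,
    inner_smul_left, inner_smul_right, inner_conj_symm]
  ring

lemma skew_qOp (u v : H) : adjoint (qOp u v) = -(qOp u v) := by
  symm
  rw [eq_adjoint_iff]
  intro x y
  simp only [neg_apply, qOp_apply, inner_neg_left, inner_add_left, inner_add_right,
    inner_smul_left, inner_smul_right, inner_conj_symm, Complex.conj_I]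
  ring

lemma skew_zOp (u : H) : adjoint (zOp u) = -(zOp u) := by
  symm
  rw [eq_adjoint_iff]
  intro x y
  simp only [neg_apply, zOp_apply, inner_neg_left, inner_smul_left, inner_smul_right,
    inner_conj_symm, Complex.conj_I]
  ring

lemma inner_skew {C : H →L[ℂ] H} (hC : adjoint C = -C) (u v : H) :
    ⟪u, C v⟫ = -⟪C u, v⟫ := by
  have h := adjoint_inner_left C v u
  rw [hC] at h
  simpa [inner_neg_left] using h.symm

lemma inner_skew_diag {C : H →L[ℂ] H} (hC : adjoint C = -C) (u : H) :
    (starRingEnd ℂ) ⟪u, C u⟫ = -⟪u, C u⟫ := by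
  rw [inner_conj_symm]
  have h := inner_skew hC u u
  linear_combination h

section Delta

variable {Ω : Type*} {Δ : (Ω → H →L[ℂ] H) → (Ω → H →L[ℂ] H)}

/-- constant map -/
def cst (Ω : Type*) (m : H →L[ℂ] H) : Ω → H →L[ℂ] H := fun _ => m

/-- The 2-local hypothesis. -/
def Hyp (Δ : (Ω → H →L[ℂ] H) → (Ω → H →L[ℂ] H)) : Prop :=
  ∀ x y : Ω → H →L[ℂ] H,
    (∀ t, adjoint (x t) = -(x t)) → (∀ t, adjoint (y t) = -(y t)) →
    ∃ a : Ω → H →L[ℂ] H, (∀ t, adjoint (a t) = -(a t)) ∧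
      Δ x = a * x - x * a ∧ Δ y = a * y - y * a

lemma pair (hΔ : Hyp Δ) {x y : Ω → H →L[ℂ] H}
    (hx : ∀ t, adjoint (x t) = -(x t)) (hy : ∀ t, adjoint (y t) = -(y t)) :
    ∃ c : Ω → H →L[ℂ] H, (∀ t, adjoint (c t) = -(c t)) ∧
      (∀ t, Δ x t = c t * x t - x t * c t) ∧ (∀ t, Δ y t = c t * y t - y t * c t) := by
  obtain ⟨a, ha, h1, h2⟩ := hΔ x y hx hy
  exact ⟨a, ha, fun t => by rw [h1]; rfl, fun t => by rw [h2]; rfl⟩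

lemma skew_cst {m : H →L[ℂ] H} (hm : adjoint m = -m) :
    ∀ t : Ω, adjoint ((cst Ω m) t) = -((cst Ω m) t) := fun _ => hm

/-- the canonical vector `η(ξ)` at a point `t`. -/
def eta (Δ : (Ω → H →L[ℂ] H) → (Ω → H →L[ℂ] H)) (t : Ω) (ξ : H) : H :=
  (-I : ℂ) • (Δ (cst Ω (zOp ξ)) t ξ)

lemma c_col_z {t : Ω} {ξ : H} (hξ : ‖ξ‖ = 1) {C : H →L[ℂ] H}
    (hC : Δ (cst Ω (zOp ξ)) t = C * zOp ξ - zOp ξ * C) :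
    C ξ = eta Δ t ξ + ⟪ξ, C ξ⟫ • ξ := by
  have hself : ⟪ξ, ξ⟫ = (1 : ℂ) := by
    rw [inner_self_eq_norm_sq_to_K, hξ]; norm_num
  have h1 : Δ (cst Ω (zOp ξ)) t ξ = I • C ξ - (I * ⟪ξ, C ξ⟫) • ξ := by
    rw [hC]
    simp only [ContinuousLinearMap.sub_apply, ContinuousLinearMap.mul_apply, zOp_apply,
      hself, one_smul, map_smul, smul_smul]
  unfold eta
  rw [h1, smul_sub, smul_smul, smul_smul]
  have h2 : (-I) * I = (1 : ℂ) := by simp [Complex.I_mul_I]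
  have h3 : (-I) * (I * ⟪ξ, C ξ⟫) = ⟪ξ, C ξ⟫ := by
    rw [← mul_assoc, h2, one_mul]
  rw [h2, h3, one_smul]
  abel

lemma ext_of_unit_diag {T₁ T₂ : H →L[ℂ] H}
    (h : ∀ ξ : H, ‖ξ‖ = 1 → ⟪ξ, T₁ ξ⟫ = ⟪ξ, T₂ ξ⟫) : T₁ = T₂ := by
  have hall : ∀ x : H, ⟪x, T₁ x⟫ = ⟪x, T₂ x⟫ := by
    intro x
    rcases eq_or_ne x 0 with rfl | hx
    · simp
    · have hr : ‖x‖ ≠ 0 := norm_ne_zero_iff.mpr hx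
      set c : ℂ := (‖x‖ : ℂ)⁻¹ with hc
      have hc0 : c ≠ 0 := by
        simp only [hc, ne_eq, inv_eq_zero, Complex.ofReal_eq_zero]
        exact hr
      have hcn : ‖c • x‖ = 1 := by
        rw [norm_smul, hc, norm_inv, Complex.norm_real, Real.norm_eq_abs,
          _root_.abs_of_nonneg (norm_nonneg x)]
        field_simp
      have h5 := h (c • x) hcn
      simp only [map_smul, inner_smul_left, inner_smul_right] at h5
      have hcc : (starRingEnd ℂ) c ≠ 0 := by
        simpa using hc0
      have h6 := mul_left_cancel₀ hc0 h5
      exact mul_left_cancel₀ hcc h6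
  have hz : ∀ x : H, ⟪(T₁ - T₂) x, x⟫ = 0 := by
    intro x
    have h2 := congrArg (starRingEnd ℂ) (hall x)
    rw [inner_conj_symm, inner_conj_symm] at h2
    simp only [ContinuousLinearMap.sub_apply, inner_sub_left]
    rw [h2]; ring
  have h0 := (inner_map_self_eq_zero ((T₁ - T₂ : H →L[ℂ] H) : H →ₗ[ℂ] H)).mp
    (by intro x; simpa [inner_sub_left] using hz x)
  ext x
  have := LinearMap.congr_fun h0 x
  simp only [ContinuousLinearMap.coe_coe, ContinuousLinearMap.sub_apply,
    LinearMap.zero_apply] at this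
  exact sub_eq_zero.mp this

end Delta

section Core

variable {Ω : Type*} {Δ : (Ω → H →L[ℂ] H) → (Ω → H →L[ℂ] H)}

lemma skew_add' {A B : H →L[ℂ] H} (hA : adjoint A = -A) (hB : adjoint B = -B) :
    adjoint (A + B) = -(A + B) := by
  rw [← star_eq_adjoint, star_add, star_eq_adjoint, star_eq_adjoint, hA, hB, neg_add]

lemma skew_real_smul' {A : H →L[ℂ] H} (r : ℝ) (hA : adjoint A = -A) :
    adjoint ((r : ℂ) • A) = -((r : ℂ) • A) := by
  rw [← star_eq_adjoint, star_smul, star_eq_adjoint, hA, Complex.star_def,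
    Complex.conj_ofReal, smul_neg]

/-- the fundamental identity (★). -/
lemma star_id (hΔ : Hyp Δ) {x : Ω → H →L[ℂ] H}
    (hx : ∀ t, adjoint (x t) = -(x t)) (t : Ω) {ξ : H} (hξ : ‖ξ‖ = 1) :
    ⟪ξ, Δ x t ξ⟫ = -⟪eta Δ t ξ, x t ξ⟫ - ⟪ξ, x t (eta Δ t ξ)⟫ := by
  obtain ⟨c, hcs, hc1, hc2⟩ := pair hΔ hx (skew_cst (skew_zOp ξ))
  have hcol := c_col_z hξ (hc2 t)
  have hβ : (starRingEnd ℂ) ⟪ξ, c t ξ⟫ = -⟪ξ, c t ξ⟫ := inner_skew_diag (hcs t) ξ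
  rw [hc1 t]
  simp only [ContinuousLinearMap.sub_apply, ContinuousLinearMap.mul_apply, inner_sub_right]
  rw [inner_skew (hcs t) ξ (x t ξ), hcol]
  simp only [map_add, map_smul, inner_add_left, inner_add_right, inner_smul_left,
    inner_smul_right, hβ]
  ring

lemma delta_zero (hΔ : Hyp Δ) (t : Ω) : Δ (0 : Ω → H →L[ℂ] H) t = 0 := by
  have h0 : ∀ s : Ω, adjoint ((0 : Ω → H →L[ℂ] H) s) = -((0 : Ω → H →L[ℂ] H) s) := by
    intro s; simp [Pi.zero_apply]
  obtain ⟨c, hcs, hc1, _⟩ := pair hΔ h0 h0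
  rw [hc1 t]; simp

lemma delta_add (hΔ : Hyp Δ) {x y : Ω → H →L[ℂ] H}
    (hx : ∀ t, adjoint (x t) = -(x t)) (hy : ∀ t, adjoint (y t) = -(y t)) (t : Ω) :
    Δ (x + y) t = Δ x t + Δ y t := by
  have hxy : ∀ t, adjoint ((x + y) t) = -((x + y) t) := fun t => by
    simpa [Pi.add_apply] using skew_add' (hx t) (hy t)
  apply ext_of_unit_diag
  intro ξ hξ
  rw [star_id hΔ hxy t hξ]
  have h1 := star_id hΔ hx t hξ
  have h2 := star_id hΔ hy t hξ
  simp only [ContinuousLinearMap.add_apply, Pi.add_apply, inner_add_right, inner_add_left,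
    map_add] at *
  rw [h1, h2]; ring

lemma delta_real_smul (hΔ : Hyp Δ) {x : Ω → H →L[ℂ] H}
    (hx : ∀ t, adjoint (x t) = -(x t)) (r : ℝ) (t : Ω) :
    Δ ((r : ℂ) • x) t = (r : ℂ) • Δ x t := by
  have hrx : ∀ t, adjoint (((r : ℂ) • x) t) = -(((r : ℂ) • x) t) := fun t => by
    simpa [Pi.smul_apply] using skew_real_smul' r (hx t)
  apply ext_of_unit_diag
  intro ξ hξ
  rw [star_id hΔ hrx t hξ]
  have h1 := star_id hΔ hx t hξ
  simp only [Pi.smul_apply, ContinuousLinearMap.coe_smul', ContinuousLinearMap.smul_apply,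
    inner_smul_right, inner_smul_left, map_smul, Complex.conj_ofReal] at *
  rw [h1]; ring

lemma eta_orth (hΔ : Hyp Δ) (t : Ω) {ξ : H} (hξ : ‖ξ‖ = 1) :
    ⟪ξ, eta Δ t ξ⟫ = 0 := by
  obtain ⟨c, hcs, hc1, _⟩ := pair hΔ (skew_cst (skew_zOp ξ)) (skew_cst (skew_zOp ξ))
  have hcol := c_col_z hξ (hc1 t)
  have hself : ⟪ξ, ξ⟫ = (1 : ℂ) := by rw [inner_self_eq_norm_sq_to_K, hξ]; norm_num
  have := congrArg (fun v => ⟪ξ, v⟫) hcol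
  simp only [inner_add_right, inner_smul_right, hself, mul_one] at this
  -- this : ⟪ξ, c t ξ⟫ = ⟪ξ, eta⟫ + ⟪ξ, c t ξ⟫
  linear_combination -this

/-- the antisymmetry relation `(R1⊥)`. -/
lemma eta_antisym (hΔ : Hyp Δ) (t : Ω) {ξ ζ : H} (hξ : ‖ξ‖ = 1) (hζ : ‖ζ‖ = 1)
    (ho : ⟪ζ, ξ⟫ = 0) :
    ⟪ζ, eta Δ t ξ⟫ = -⟪eta Δ t ζ, ξ⟫ := by
  obtain ⟨c, hcs, hc1, hc2⟩ := pair hΔ (skew_cst (skew_zOp ξ)) (skew_cst (skew_zOp ζ))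
  have hcolξ := c_col_z hξ (hc1 t)
  have hcolζ := c_col_z hζ (hc2 t)
  have hoζ : ⟪ξ, ζ⟫ = 0 := by
    rw [← inner_conj_symm, ho]; simp
  have h1 : ⟪ζ, c t ξ⟫ = ⟪ζ, eta Δ t ξ⟫ := by
    rw [hcolξ]; simp [inner_add_right, inner_smul_right, ho]
  have h2 : ⟪ξ, c t ζ⟫ = ⟪ξ, eta Δ t ζ⟫ := by
    rw [hcolζ]; simp [inner_add_right, inner_smul_right, hoζ]
  have h3 : ⟪ζ, c t ξ⟫ = -⟪c t ζ, ξ⟫ := by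
    rw [inner_skew (hcs t) ζ ξ]
  rw [h1] at h3; rw [h3]
  have h4 := congrArg (starRingEnd ℂ) h2
  rw [inner_conj_symm, inner_conj_symm] at h4
  rw [h4]

end Core

section G

variable {Ω : Type*} {Δ : (Ω → H →L[ℂ] H) → (Ω → H →L[ℂ] H)}

lemma pOp_add_left (u u' v : H) : pOp (u + u') v = pOp u v + pOp u' v := by
  ext x
  simp only [pOp_apply, ContinuousLinearMap.add_apply, inner_add_left]
  module

lemma qOp_add_left (u u' v : H) : qOp (u + u') v = qOp u v + qOp u' v := by
  ext x
  simp only [qOp_apply, ContinuousLinearMap.add_apply, inner_add_left]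
  module

lemma pOp_real_smul (r : ℝ) (u v : H) : pOp ((r : ℂ) • u) v = (r : ℂ) • pOp u v := by
  ext x
  simp only [pOp_apply, ContinuousLinearMap.smul_apply, inner_smul_left, Complex.conj_ofReal]
  module

lemma qOp_real_smul (r : ℝ) (u v : H) : qOp ((r : ℂ) • u) v = (r : ℂ) • qOp u v := by
  ext x
  simp only [qOp_apply, ContinuousLinearMap.smul_apply, inner_smul_left, Complex.conj_ofReal]
  module

lemma pOp_I_smul (u v : H) : pOp (I • u) v = qOp u v := by
  ext x
  simp only [pOp_apply, qOp_apply, ContinuousLinearMap.smul_apply, inner_smul_left,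
    Complex.conj_I]
  module

lemma qOp_I_smul (u v : H) : qOp (I • u) v = -(pOp u v) := by
  ext x
  simp only [qOp_apply, pOp_apply, ContinuousLinearMap.smul_apply,
    ContinuousLinearMap.neg_apply, inner_smul_left, Complex.conj_I]
  match_scalars <;> (ring_nf; try simp [Complex.I_sq]; try ring)

/-- the candidate implementing operator, as a bare function. -/
def Gfun (Δ : (Ω → H →L[ℂ] H) → (Ω → H →L[ℂ] H)) (t : Ω) (w v : H) : H :=
  (2⁻¹ : ℂ) • (Δ (cst Ω (pOp v w)) t w - I • Δ (cst Ω (qOp v w)) t w)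

lemma delta_neg (hΔ : Hyp Δ) {x : Ω → H →L[ℂ] H}
    (hx : ∀ t, adjoint (x t) = -(x t)) (t : Ω) : Δ (-x) t = -(Δ x t) := by
  have h := delta_real_smul hΔ hx (-1) t
  have h2 : ((-1 : ℝ) : ℂ) • x = -x := by
    push_cast; exact neg_one_smul ℂ x
  rw [h2] at h
  rw [h]
  push_cast
  exact neg_one_smul ℂ (Δ x t)

lemma Gfun_add (hΔ : Hyp Δ) (t : Ω) (w u v : H) :
    Gfun Δ t w (u + v) = Gfun Δ t w u + Gfun Δ t w v := by
  unfold Gfun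
  rw [pOp_add_left, qOp_add_left]
  have h1 : cst Ω (pOp u w + pOp v w) = cst Ω (pOp u w) + cst Ω (pOp v w) := rfl
  have h2 : cst Ω (qOp u w + qOp v w) = cst Ω (qOp u w) + cst Ω (qOp v w) := rfl
  rw [h1, h2, delta_add hΔ (skew_cst (skew_pOp u w)) (skew_cst (skew_pOp v w)),
    delta_add hΔ (skew_cst (skew_qOp u w)) (skew_cst (skew_qOp v w))]
  simp only [ContinuousLinearMap.add_apply]
  module

lemma Gfun_real_smul (hΔ : Hyp Δ) (t : Ω) (w v : H) (r : ℝ) :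
    Gfun Δ t w ((r : ℂ) • v) = (r : ℂ) • Gfun Δ t w v := by
  unfold Gfun
  rw [pOp_real_smul, qOp_real_smul]
  have h1 : cst Ω ((r:ℂ) • pOp v w) = (r:ℂ) • cst Ω (pOp v w) := rfl
  have h2 : cst Ω ((r:ℂ) • qOp v w) = (r:ℂ) • cst Ω (qOp v w) := rfl
  rw [h1, h2, delta_real_smul hΔ (skew_cst (skew_pOp v w)) r t,
    delta_real_smul hΔ (skew_cst (skew_qOp v w)) r t]
  simp only [ContinuousLinearMap.smul_apply]
  module

lemma Gfun_I_smul (hΔ : Hyp Δ) (t : Ω) (w v : H) :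
    Gfun Δ t w (I • v) = I • Gfun Δ t w v := by
  unfold Gfun
  rw [pOp_I_smul, qOp_I_smul]
  have h2 : cst Ω (-(pOp v w)) = -(cst Ω (pOp v w)) := rfl
  rw [h2, delta_neg hΔ (skew_cst (skew_pOp v w)) t]
  simp only [ContinuousLinearMap.neg_apply]
  match_scalars <;> (ring_nf; try simp [Complex.I_sq]; try ring)

lemma Gfun_smul (hΔ : Hyp Δ) (t : Ω) (w v : H) (c : ℂ) :
    Gfun Δ t w (c • v) = c • Gfun Δ t w v := by
  have hdec : c • v = (c.re : ℂ) • v + (c.im : ℂ) • (I • v) := by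
    rw [smul_smul, ← add_smul]
    congr 1
    simpa using (Complex.re_add_im c)
  rw [hdec, Gfun_add hΔ, Gfun_real_smul hΔ, Gfun_real_smul hΔ, Gfun_I_smul hΔ]
  rw [smul_smul, ← add_smul]
  congr 1
  simpa using (Complex.re_add_im c)

/-- `G` as a linear map. -/
def Glin (hΔ : Hyp Δ) (t : Ω) (w : H) : H →ₗ[ℂ] H where
  toFun := Gfun Δ t w
  map_add' := Gfun_add hΔ t w
  map_smul' := fun c v => Gfun_smul hΔ t w v c

@[simp] lemma Glin_apply (hΔ : Hyp Δ) (t : Ω) (w v : H) :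
    Glin hΔ t w v = Gfun Δ t w v := rfl

lemma pOp_self (w : H) : pOp w w = 0 := by
  ext x; simp

lemma Gfun_w (hΔ : Hyp Δ) (t : Ω) (w : H) :
    Gfun Δ t w w = eta Δ t w := by
  unfold Gfun
  have h1 : cst Ω (pOp w w) = (0 : Ω → H →L[ℂ] H) := by
    rw [pOp_self]; rfl
  have h2 : qOp w w = ((2:ℝ) : ℂ) • zOp w := by
    ext x
    simp only [qOp_apply, zOp_apply, ContinuousLinearMap.smul_apply]
    match_scalars
    push_cast; ring
  have h3 : cst Ω (((2:ℝ):ℂ) • zOp w) = ((2:ℝ):ℂ) • cst Ω (zOp w) := rfl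
  rw [h1, h2, h3, delta_zero hΔ, delta_real_smul hΔ (skew_cst (skew_zOp w)) 2 t]
  unfold eta
  simp only [ContinuousLinearMap.zero_apply, ContinuousLinearMap.smul_apply]
  match_scalars
  push_cast; ring

end G

section Rows

variable {Ω : Type*} {Δ : (Ω → H →L[ℂ] H) → (Ω → H →L[ℂ] H)}

lemma inner_one_of_unit {w : H} (hw : ‖w‖ = 1) : ⟪w, w⟫ = (1 : ℂ) := by
  rw [inner_self_eq_norm_sq_to_K, hw]; norm_num

lemma pOp_apply_w {w v : H} (hw : ⟪w, w⟫ = (1:ℂ)) (hvw : ⟪v, w⟫ = 0) :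
    pOp v w w = v := by
  simp [pOp_apply, hw, hvw, -inner_self_eq_norm_sq_to_K]

lemma qOp_apply_w {w v : H} (hw : ⟪w, w⟫ = (1:ℂ)) (hvw : ⟪v, w⟫ = 0) :
    qOp v w w = I • v := by
  simp [qOp_apply, hw, hvw, -inner_self_eq_norm_sq_to_K]

lemma eval_bracket {m : H →L[ℂ] H} {C : H →L[ℂ] H} {t : Ω}
    (hC : Δ (cst Ω m) t = C * m - m * C) (x : H) :
    Δ (cst Ω m) t x = C (m x) - m (C x) := by
  rw [hC]; rfl

/-- row lemma at `w`:  `⟪w, G v⟫ = -⟪η(w), v⟫` for `v ⊥ w`. -/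
lemma G_row_w (hΔ : Hyp Δ) (t : Ω) {w v : H} (hw : ‖w‖ = 1) (hvw : ⟪w, v⟫ = 0) :
    ⟪w, Gfun Δ t w v⟫ = -⟪eta Δ t w, v⟫ := by
  have hww := inner_one_of_unit hw
  have hvw' : ⟪v, w⟫ = 0 := by rw [← inner_conj_symm, hvw, map_zero]
  obtain ⟨c, hcs, hcp, hcz⟩ := pair hΔ (skew_cst (skew_pOp v w)) (skew_cst (skew_zOp w))
  obtain ⟨c', hcs', hcq, hcz'⟩ := pair hΔ (skew_cst (skew_qOp v w)) (skew_cst (skew_zOp w))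
  have hcol : c t w = eta Δ t w + ⟪w, c t w⟫ • w := c_col_z hw (hcz t)
  have hcol' : c' t w = eta Δ t w + ⟪w, c' t w⟫ • w := c_col_z hw (hcz' t)
  set η := eta Δ t w with hη
  set β := ⟪w, c t w⟫ with hβ
  set β' := ⟪w, c' t w⟫ with hβ'
  have hηw : ⟪w, η⟫ = 0 := eta_orth hΔ t hw
  -- p-part
  have hXp : ⟪w, Δ (cst Ω (pOp v w)) t w⟫ = -⟪η, v⟫ + ⟪v, η⟫ := by
    rw [eval_bracket (hcp t), pOp_apply_w hww hvw', inner_sub_right]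
    rw [inner_skew (hcs t) w v, hcol]
    simp only [pOp_apply, inner_add_left, inner_add_right, inner_smul_left, inner_smul_right,
      inner_sub_right, hvw, hvw', hww, hηw, inner_conj_symm]
    ring
  -- q-part
  have hXq : ⟪w, Δ (cst Ω (qOp v w)) t w⟫ = -I * ⟪η, v⟫ - I * ⟪v, η⟫ := by
    rw [eval_bracket (hcq t), qOp_apply_w hww hvw', inner_sub_right, map_smul,
      inner_smul_right]
    rw [inner_skew (hcs' t) w v, hcol']
    simp only [qOp_apply, inner_add_left, inner_add_right, inner_smul_left, inner_smul_right,
      inner_sub_right, hvw, hvw', hww, hηw, inner_conj_symm, Complex.conj_I]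
    ring
  unfold Gfun
  rw [inner_smul_right, inner_sub_right, inner_smul_right, hXp, hXq]
  have h2 : I * I = (-1 : ℂ) := Complex.I_mul_I
  linear_combination (2⁻¹ * ⟪η, v⟫ + 2⁻¹ * ⟪v, η⟫) * h2

/-- row lemma orthogonal to the plane:  `⟪ζ, G v⟫ = ⟪ζ, η(v)⟫` for unit `v ⊥ w`,
`ζ ⊥ v`, `ζ ⊥ w`. -/
lemma G_row_perp (hΔ : Hyp Δ) (t : Ω) {w v ζ : H} (hw : ‖w‖ = 1) (hv : ‖v‖ = 1)
    (hvw : ⟪v, w⟫ = 0) (hζv : ⟪ζ, v⟫ = 0) (hζw : ⟪ζ, w⟫ = 0) :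
    ⟪ζ, Gfun Δ t w v⟫ = ⟪ζ, eta Δ t v⟫ := by
  have hww := inner_one_of_unit hw
  obtain ⟨c, hcs, hcp, hcz⟩ := pair hΔ (skew_cst (skew_pOp v w)) (skew_cst (skew_zOp v))
  obtain ⟨c', hcs', hcq, hcz'⟩ := pair hΔ (skew_cst (skew_qOp v w)) (skew_cst (skew_zOp v))
  have hcol : c t v = eta Δ t v + ⟪v, c t v⟫ • v := c_col_z hv (hcz t)
  have hcol' : c' t v = eta Δ t v + ⟪v, c' t v⟫ • v := c_col_z hv (hcz' t)
  set η := eta Δ t v with hη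
  have hXp : ⟪ζ, Δ (cst Ω (pOp v w)) t w⟫ = ⟪ζ, η⟫ := by
    rw [eval_bracket (hcp t), pOp_apply_w hww hvw, inner_sub_right, hcol]
    simp only [pOp_apply, inner_add_right, inner_smul_right, inner_sub_right, hζv, hζw]
    ring
  have hXq : ⟪ζ, Δ (cst Ω (qOp v w)) t w⟫ = I * ⟪ζ, η⟫ := by
    rw [eval_bracket (hcq t), qOp_apply_w hww hvw, inner_sub_right, map_smul,
      inner_smul_right, hcol']
    simp only [qOp_apply, inner_add_right, inner_smul_right, hζv, hζw]
    ring
  unfold Gfun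
  rw [inner_smul_right, inner_sub_right, inner_smul_right, hXp, hXq]
  have h2 : I * I = (-1 : ℂ) := Complex.I_mul_I
  linear_combination (-(2⁻¹ : ℂ) * ⟪ζ, η⟫) * h2

end Rows

section Skewness

variable {Ω : Type*} {Δ : (Ω → H →L[ℂ] H) → (Ω → H →L[ℂ] H)}

lemma phi_perp (hΔ : Hyp Δ) (t : Ω) {w u v : H} (hw : ‖w‖ = 1)
    (hu : ⟪w, u⟫ = 0) (hv : ⟪w, v⟫ = 0) :
    (starRingEnd ℂ) ⟪v, Gfun Δ t w u⟫ + ⟪u, Gfun Δ t w v⟫ = 0 := by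
  have hww := inner_one_of_unit hw
  have hu' : ⟪u, w⟫ = 0 := by rw [← inner_conj_symm, hu, map_zero]
  have hv' : ⟪v, w⟫ = 0 := by rw [← inner_conj_symm, hv, map_zero]
  obtain ⟨c, hcs, hc1, hc2⟩ := pair hΔ (skew_cst (skew_pOp v w)) (skew_cst (skew_pOp u w))
  obtain ⟨c', hcs', hc1', hc2'⟩ := pair hΔ (skew_cst (skew_qOp v w)) (skew_cst (skew_qOp u w))
  set C := c t
  set C' := c' t
  set β := ⟪w, C w⟫ with hβdef
  set β' := ⟪w, C' w⟫ with hβ'def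
  have hX1 : ⟪u, Δ (cst Ω (pOp v w)) t w⟫ = ⟪u, C v⟫ - β * ⟪u, v⟫ := by
    rw [eval_bracket (hc1 t), pOp_apply_w hww hv', inner_sub_right]
    simp only [pOp_apply, inner_sub_right, inner_smul_right, hu']
    ring
  have hX2 : ⟪v, Δ (cst Ω (pOp u w)) t w⟫ = ⟪v, C u⟫ - β * ⟪v, u⟫ := by
    rw [eval_bracket (hc2 t), pOp_apply_w hww hu', inner_sub_right]
    simp only [pOp_apply, inner_sub_right, inner_smul_right, hv']
    ring
  have hY1 : ⟪u, Δ (cst Ω (qOp v w)) t w⟫ = I * ⟪u, C' v⟫ - I * β' * ⟪u, v⟫ := by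
    rw [eval_bracket (hc1' t), qOp_apply_w hww hv', inner_sub_right, map_smul,
      inner_smul_right]
    simp only [qOp_apply, inner_add_right, inner_smul_right, hu']
    ring
  have hY2 : ⟪v, Δ (cst Ω (qOp u w)) t w⟫ = I * ⟪v, C' u⟫ - I * β' * ⟪v, u⟫ := by
    rw [eval_bracket (hc2' t), qOp_apply_w hww hu', inner_sub_right, map_smul,
      inner_smul_right]
    simp only [qOp_apply, inner_add_right, inner_smul_right, hv']
    ring
  have hGv : ⟪u, Gfun Δ t w v⟫ =
      2⁻¹ * ((⟪u, C v⟫ - β * ⟪u, v⟫) - I * (I * ⟪u, C' v⟫ - I * β' * ⟪u, v⟫)) := by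
    unfold Gfun
    rw [inner_smul_right, inner_sub_right, inner_smul_right, hX1, hY1]
  have hGu : ⟪v, Gfun Δ t w u⟫ =
      2⁻¹ * ((⟪v, C u⟫ - β * ⟪v, u⟫) - I * (I * ⟪v, C' u⟫ - I * β' * ⟪v, u⟫)) := by
    unfold Gfun
    rw [inner_smul_right, inner_sub_right, inner_smul_right, hX2, hY2]
  rw [hGu, hGv]
  have e1 : (starRingEnd ℂ) ⟪v, C u⟫ = -⟪u, C v⟫ := by
    rw [inner_conj_symm]
    have h := inner_skew (hcs t) u v
    linear_combination h
  have e1' : (starRingEnd ℂ) ⟪v, C' u⟫ = -⟪u, C' v⟫ := by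
    rw [inner_conj_symm]
    have h := inner_skew (hcs' t) u v
    linear_combination h
  have e2 : (starRingEnd ℂ) β = -β := inner_skew_diag (hcs t) w
  have e2' : (starRingEnd ℂ) β' = -β' := inner_skew_diag (hcs' t) w
  have e3 : (starRingEnd ℂ) ⟪v, u⟫ = ⟪u, v⟫ := inner_conj_symm u v
  simp only [map_mul, map_sub, map_inv₀, map_ofNat, Complex.conj_I, e1, e1', e2, e2', e3]
  ring

lemma phi_wv (hΔ : Hyp Δ) (t : Ω) {w v : H} (hw : ‖w‖ = 1) (hv : ⟪w, v⟫ = 0) :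
    (starRingEnd ℂ) ⟪v, Gfun Δ t w w⟫ + ⟪w, Gfun Δ t w v⟫ = 0 := by
  rw [Gfun_w hΔ t w, G_row_w hΔ t hw hv, inner_conj_symm]
  ring

lemma phi_vw (hΔ : Hyp Δ) (t : Ω) {w v : H} (hw : ‖w‖ = 1) (hv : ⟪w, v⟫ = 0) :
    (starRingEnd ℂ) ⟪w, Gfun Δ t w v⟫ + ⟪v, Gfun Δ t w w⟫ = 0 := by
  have h := phi_wv hΔ t hw hv
  have h2 := congrArg (starRingEnd ℂ) h
  simp only [map_add, Complex.conj_conj, map_zero] at h2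
  linear_combination h2

lemma phi_ww (hΔ : Hyp Δ) (t : Ω) {w : H} (hw : ‖w‖ = 1) :
    (starRingEnd ℂ) ⟪w, Gfun Δ t w w⟫ + ⟪w, Gfun Δ t w w⟫ = 0 := by
  rw [Gfun_w hΔ t w, eta_orth hΔ t hw]
  simp

lemma Gfun_skew (hΔ : Hyp Δ) (t : Ω) {w : H} (hw : ‖w‖ = 1) (u v : H) :
    (starRingEnd ℂ) ⟪v, Gfun Δ t w u⟫ + ⟪u, Gfun Δ t w v⟫ = 0 := by
  have hww := inner_one_of_unit hw
  set a := ⟪w, u⟫ with ha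
  set b := ⟪w, v⟫ with hb
  set u' := u - a • w with hu'def
  set v' := v - b • w with hv'def
  have hu' : ⟪w, u'⟫ = 0 := by
    rw [hu'def]
    simp [inner_sub_right, inner_smul_right, hww, ha, -inner_self_eq_norm_sq_to_K]
  have hv' : ⟪w, v'⟫ = 0 := by
    rw [hv'def]
    simp [inner_sub_right, inner_smul_right, hww, hb, -inner_self_eq_norm_sq_to_K]
  have hdecu : u = a • w + u' := by rw [hu'def]; abel
  have hdecv : v = b • w + v' := by rw [hv'def]; abel
  have hGu : Gfun Δ t w u = a • Gfun Δ t w w + Gfun Δ t w u' := by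
    conv_lhs => rw [hdecu]
    rw [Gfun_add hΔ, Gfun_smul hΔ]
  have hGv : Gfun Δ t w v = b • Gfun Δ t w w + Gfun Δ t w v' := by
    conv_lhs => rw [hdecv]
    rw [Gfun_add hΔ, Gfun_smul hΔ]
  have h1 := phi_ww hΔ t hw
  have h2 := phi_wv hΔ t hw hv'
  have h3 := phi_vw hΔ t hw hu'
  have h4 := phi_perp hΔ t hw hu' hv'
  calc (starRingEnd ℂ) ⟪v, Gfun Δ t w u⟫ + ⟪u, Gfun Δ t w v⟫
      = (starRingEnd ℂ) ⟪b • w + v', a • Gfun Δ t w w + Gfun Δ t w u'⟫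
        + ⟪a • w + u', b • Gfun Δ t w w + Gfun Δ t w v'⟫ := by
        rw [← hdecu, ← hdecv, ← hGu, ← hGv]
    _ = 0 := by
        simp only [inner_add_left, inner_add_right, inner_smul_left, inner_smul_right,
          map_add, map_mul, Complex.conj_conj]
        linear_combination ((starRingEnd ℂ) a * b) * h1 + ((starRingEnd ℂ) a) * h2
          + b * h3 + h4

lemma Gfun_skew' (hΔ : Hyp Δ) (t : Ω) {w : H} (hw : ‖w‖ = 1) (u v : H) :
    ⟪Gfun Δ t w u, v⟫ = -⟪u, Gfun Δ t w v⟫ := by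
  have h := Gfun_skew hΔ t hw u v
  have h2 : (starRingEnd ℂ) ⟪v, Gfun Δ t w u⟫ = ⟪Gfun Δ t w u, v⟫ :=
    inner_conj_symm (Gfun Δ t w u) v
  linear_combination h - h2

/-- `G` is continuous, hence a continuous linear map. -/
def Gc (hΔ : Hyp Δ) (t : Ω) (w : H) (hw : ‖w‖ = 1) : H →L[ℂ] H := by
  refine ⟨Glin hΔ t w, ?_⟩
  have hsym : (I • Glin hΔ t w).IsSymmetric := by
    intro x y
    simp only [LinearMap.smul_apply, inner_smul_left, inner_smul_right, Complex.conj_I,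
      Glin_apply]
    rw [Gfun_skew' hΔ t hw]
    ring
  have hcont := hsym.continuous
  have : Continuous fun x => (-I : ℂ) • ((I • Glin hΔ t w) x) := hcont.const_smul _
  convert this using 1
  funext x
  simp only [LinearMap.smul_apply, smul_smul, Glin_apply]
  rw [show (-I) * I = (1:ℂ) by simp [Complex.I_mul_I]]
  simp

@[simp] lemma Gc_apply (hΔ : Hyp Δ) (t : Ω) (w : H) (hw : ‖w‖ = 1) (v : H) :
    Gc hΔ t w hw v = Gfun Δ t w v := rfl

lemma Gc_skewadj (hΔ : Hyp Δ) (t : Ω) (w : H) (hw : ‖w‖ = 1) :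
    adjoint (Gc hΔ t w hw) = -(Gc hΔ t w hw) := by
  symm
  rw [eq_adjoint_iff]
  intro x y
  simp only [ContinuousLinearMap.neg_apply, inner_neg_left, Gc_apply]
  rw [Gfun_skew' hΔ t hw]
  ring

end Skewness

section Pins

variable {Ω : Type*} {Δ : (Ω → H →L[ℂ] H) → (Ω → H →L[ℂ] H)}

lemma pOp_apply_v {w v : H} (hvv : ⟪v, v⟫ = (1:ℂ)) (hwv : ⟪w, v⟫ = 0) :
    pOp v w v = -w := by
  simp [pOp_apply, hvv, hwv, -inner_self_eq_norm_sq_to_K]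

lemma qOp_apply_v {w v : H} (hvv : ⟪v, v⟫ = (1:ℂ)) (hwv : ⟪w, v⟫ = 0) :
    qOp v w v = I • w := by
  simp [qOp_apply, hvv, hwv, -inner_self_eq_norm_sq_to_K]

lemma P_diag_p {t : Ω} {w v : H} (hww : ⟪w,w⟫ = (1:ℂ)) (hvv : ⟪v,v⟫ = (1:ℂ))
    (hvw : ⟪v,w⟫ = 0) {C : H →L[ℂ] H}
    (hC : Δ (cst Ω (pOp v w)) t = C * pOp v w - pOp v w * C) :
    ⟪v, Δ (cst Ω (pOp v w)) t w⟫ = ⟪v, C v⟫ - ⟪w, C w⟫ := by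
  rw [eval_bracket hC, pOp_apply_w hww hvw, inner_sub_right]
  simp only [pOp_apply, inner_sub_right, inner_smul_right, hvv, hvw]
  ring

lemma P_diag_q {t : Ω} {w v : H} (hww : ⟪w,w⟫ = (1:ℂ)) (hvv : ⟪v,v⟫ = (1:ℂ))
    (hvw : ⟪v,w⟫ = 0) {C : H →L[ℂ] H}
    (hC : Δ (cst Ω (qOp v w)) t = C * qOp v w - qOp v w * C) :
    ⟪v, Δ (cst Ω (qOp v w)) t w⟫ = I * (⟪v, C v⟫ - ⟪w, C w⟫) := by
  rw [eval_bracket hC, qOp_apply_w hww hvw, inner_sub_right, map_smul, inner_smul_right]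
  simp only [qOp_apply, inner_add_right, inner_smul_right, hvv, hvw]
  ring

lemma P_offdiag_p {t : Ω} {w v : H} (hvv : ⟪v,v⟫ = (1:ℂ)) (hwv : ⟪w,v⟫ = 0)
    (hvw : ⟪v,w⟫ = 0) {C : H →L[ℂ] H} (hCs : adjoint C = -C)
    (hC : Δ (cst Ω (pOp v w)) t = C * pOp v w - pOp v w * C) :
    ⟪v, Δ (cst Ω (pOp v w)) t v⟫ = -⟪v, C w⟫ + (starRingEnd ℂ) ⟪v, C w⟫ := by
  rw [eval_bracket hC, pOp_apply_v hvv hwv, inner_sub_right, map_neg, inner_neg_right]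
  have hskew : ⟪w, C v⟫ = -⟪C w, v⟫ := inner_skew hCs w v
  have hconj : ⟪C w, v⟫ = (starRingEnd ℂ) ⟪v, C w⟫ := (inner_conj_symm (C w) v).symm
  simp only [pOp_apply, inner_sub_right, inner_smul_right, hvv, hvw, hskew, hconj]
  ring

lemma P_offdiag_q {t : Ω} {w v : H} (hvv : ⟪v,v⟫ = (1:ℂ)) (hwv : ⟪w,v⟫ = 0)
    (hvw : ⟪v,w⟫ = 0) {C : H →L[ℂ] H} (hCs : adjoint C = -C)
    (hC : Δ (cst Ω (qOp v w)) t = C * qOp v w - qOp v w * C) :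
    ⟪v, Δ (cst Ω (qOp v w)) t v⟫ = I * (⟪v, C w⟫ + (starRingEnd ℂ) ⟪v, C w⟫) := by
  rw [eval_bracket hC, qOp_apply_v hvv hwv, inner_sub_right, map_smul, inner_smul_right]
  have hskew : ⟪w, C v⟫ = -⟪C w, v⟫ := inner_skew hCs w v
  have hconj : ⟪C w, v⟫ = (starRingEnd ℂ) ⟪v, C w⟫ := (inner_conj_symm (C w) v).symm
  simp only [qOp_apply, inner_add_right, inner_smul_right, hvv, hvw, hskew, hconj]
  ring

lemma M1 (hΔ : Hyp Δ) (t : Ω) {w v : H} (hw : ‖w‖ = 1) (hvv : ⟪v,v⟫ = (1:ℂ))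
    (hwv : ⟪w,v⟫ = 0) (hvw : ⟪v,w⟫ = 0) :
    ⟪v, Δ (cst Ω (pOp v w)) t v⟫ =
      -⟪v, eta Δ t w⟫ + (starRingEnd ℂ) ⟪v, eta Δ t w⟫ := by
  obtain ⟨c, hcs, hc1, hc2⟩ := pair hΔ (skew_cst (skew_pOp v w)) (skew_cst (skew_zOp w))
  have hcol := c_col_z hw (hc2 t)
  have h := P_offdiag_p hvv hwv hvw (hcs t) (hc1 t)
  have hcw : ⟪v, c t w⟫ = ⟪v, eta Δ t w⟫ := by
    rw [hcol]
    simp [inner_add_right, inner_smul_right, hvw]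
  rw [h, hcw]

lemma M2 (hΔ : Hyp Δ) (t : Ω) {w v : H} (hw : ‖w‖ = 1) (hvv : ⟪v,v⟫ = (1:ℂ))
    (hwv : ⟪w,v⟫ = 0) (hvw : ⟪v,w⟫ = 0) :
    ⟪v, Δ (cst Ω (qOp v w)) t v⟫ =
      I * (⟪v, eta Δ t w⟫ + (starRingEnd ℂ) ⟪v, eta Δ t w⟫) := by
  obtain ⟨c, hcs, hc1, hc2⟩ := pair hΔ (skew_cst (skew_qOp v w)) (skew_cst (skew_zOp w))
  have hcol := c_col_z hw (hc2 t)
  have h := P_offdiag_q hvv hwv hvw (hcs t) (hc1 t)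
  have hcw : ⟪v, c t w⟫ = ⟪v, eta Δ t w⟫ := by
    rw [hcol]
    simp [inner_add_right, inner_smul_right, hvw]
  rw [h, hcw]

lemma V_eq {t : Ω} {w v : H} (hww : ⟪w,w⟫ = (1:ℂ)) (hvv : ⟪v,v⟫ = (1:ℂ))
    (hvw : ⟪v,w⟫ = 0) (hwv : ⟪w,v⟫ = 0) (α β : ℂ) {C : H →L[ℂ] H}
    (hC : Δ (cst Ω (zOp (α•w + β•v))) t
        = C * zOp (α•w + β•v) - zOp (α•w + β•v) * C) :
    ⟪v, Δ (cst Ω (zOp (α•w + β•v))) t w⟫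
      = I * (((starRingEnd ℂ) α * α - (starRingEnd ℂ) β * β) * ⟪v, C w⟫
          + (starRingEnd ℂ) α * β * (⟪v, C v⟫ - ⟪w, C w⟫)) := by
  rw [eval_bracket hC, inner_sub_right]
  simp only [zOp_apply, map_smul, inner_smul_right, inner_add_left, inner_add_right,
    inner_smul_left, inner_smul_right, map_add, map_mul, hww, hvv, hvw, hwv]
  ring

end Pins

section Core2

variable {Ω : Type*} {Δ : (Ω → H →L[ℂ] H) → (Ω → H →L[ℂ] H)}

lemma delta1_vals (hΔ : Hyp Δ) (t : Ω) {w v : H} (hw : ‖w‖ = 1) (hv : ‖v‖ = 1)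
    (hvw : ⟪v, w⟫ = 0) (hwv : ⟪w, v⟫ = 0) (α : ℂ) (βr : ℝ)
    {c₁ : Ω → H →L[ℂ] H} (hc₁s : ∀ s, adjoint (c₁ s) = -(c₁ s))
    (hc₁ : ∀ s, Δ (cst Ω (zOp (α•w + (βr:ℂ)•v))) s
        = c₁ s * cst Ω (zOp (α•w + (βr:ℂ)•v)) s
          - cst Ω (zOp (α•w + (βr:ℂ)•v)) s * c₁ s)
    (hc₁w : ∀ s, Δ (cst Ω (zOp w)) s
        = c₁ s * cst Ω (zOp w) s - cst Ω (zOp w) s * c₁ s) :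
    (α + (starRingEnd ℂ) α) * (βr:ℂ)
        * ((⟪v, c₁ t v⟫ - ⟪w, c₁ t w⟫) - ⟪v, Δ (cst Ω (pOp v w)) t w⟫) = 0 ∧
    (α - (starRingEnd ℂ) α) * (βr:ℂ)
        * ((⟪v, c₁ t v⟫ - ⟪w, c₁ t w⟫)
            - (-I * ⟪v, Δ (cst Ω (qOp v w)) t w⟫)) = 0 := by
  have hww := inner_one_of_unit hw
  have hvv := inner_one_of_unit hv
  set β : ℂ := (βr : ℂ) with hβ
  have hβc : (starRingEnd ℂ) β = β := Complex.conj_ofReal βr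
  set η := eta Δ t w with hη
  set A : ℂ := ⟪v, η⟫ with hA
  have hcolw := c_col_z hw (hc₁w t)
  have hvcw : ⟪v, c₁ t w⟫ = A := by
    rw [hcolw]; simp [inner_add_right, inner_smul_right, hvw, hA, hη]
  set δ₁ : ℂ := ⟪v, c₁ t v⟫ - ⟪w, c₁ t w⟫ with hδ₁
  have hδ₁c : (starRingEnd ℂ) δ₁ = -δ₁ := by
    rw [hδ₁, map_sub, inner_skew_diag (hc₁s t), inner_skew_diag (hc₁s t)]; ring
  have EqA : ⟪v, Δ (cst Ω (zOp (α•w + β•v))) t w⟫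
      = I * (((starRingEnd ℂ) α * α - (starRingEnd ℂ) β * β) * A
          + (starRingEnd ℂ) α * β * δ₁) := by
    rw [V_eq hww hvv hvw hwv α β (hc₁ t), hvcw]
  constructor
  · -- p-part
    obtain ⟨c₂, hc₂s, hc₂z, hc₂p⟩ :=
      pair hΔ (skew_cst (skew_zOp (α•w + β•v))) (skew_cst (skew_pOp v w))
    set B : ℂ := ⟪v, c₂ t w⟫ with hB
    set δ₂ : ℂ := ⟪v, c₂ t v⟫ - ⟪w, c₂ t w⟫ with hδ₂
    have hδ₂c : (starRingEnd ℂ) δ₂ = -δ₂ := by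
      rw [hδ₂, map_sub, inner_skew_diag (hc₂s t), inner_skew_diag (hc₂s t)]; ring
    have hTp : ⟪v, Δ (cst Ω (pOp v w)) t w⟫ = δ₂ := P_diag_p hww hvv hvw (hc₂p t)
    have EqB : ⟪v, Δ (cst Ω (zOp (α•w + β•v))) t w⟫
        = I * (((starRingEnd ℂ) α * α - (starRingEnd ℂ) β * β) * B
            + (starRingEnd ℂ) α * β * δ₂) :=
      V_eq hww hvv hvw hwv α β (hc₂z t)
    have pinB : -B + (starRingEnd ℂ) B = -A + (starRingEnd ℂ) A := by
      have h1 := P_offdiag_p hvv hwv hvw (hc₂s t) (hc₂p t)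
      have h2 := M1 hΔ t hw hvv hwv hvw
      rw [h1] at h2
      exact h2
    have E1 : ((starRingEnd ℂ) α * α - (starRingEnd ℂ) β * β) * A
        + (starRingEnd ℂ) α * β * δ₁
        = ((starRingEnd ℂ) α * α - (starRingEnd ℂ) β * β) * B
        + (starRingEnd ℂ) α * β * δ₂ := by
      have h := EqA.symm.trans EqB
      exact mul_left_cancel₀ Complex.I_ne_zero h
    have E2 := congrArg (starRingEnd ℂ) E1
    simp only [map_add, map_mul, map_sub, Complex.conj_conj, hβc, hδ₁c, hδ₂c] at E2
    simp only [hβc] at E1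
    rw [hTp]
    linear_combination E1 - E2 - ((starRingEnd ℂ) α * α - β * β) * pinB
  · -- q-part
    obtain ⟨c₃, hc₃s, hc₃z, hc₃q⟩ :=
      pair hΔ (skew_cst (skew_zOp (α•w + β•v))) (skew_cst (skew_qOp v w))
    set B : ℂ := ⟪v, c₃ t w⟫ with hB
    set δ₃ : ℂ := ⟪v, c₃ t v⟫ - ⟪w, c₃ t w⟫ with hδ₃
    have hδ₃c : (starRingEnd ℂ) δ₃ = -δ₃ := by
      rw [hδ₃, map_sub, inner_skew_diag (hc₃s t), inner_skew_diag (hc₃s t)]; ring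
    have hTq : -I * ⟪v, Δ (cst Ω (qOp v w)) t w⟫ = δ₃ := by
      rw [P_diag_q hww hvv hvw (hc₃q t)]
      have h2 : I * I = (-1:ℂ) := Complex.I_mul_I
      linear_combination -δ₃ * h2
    have EqC : ⟪v, Δ (cst Ω (zOp (α•w + β•v))) t w⟫
        = I * (((starRingEnd ℂ) α * α - (starRingEnd ℂ) β * β) * B
            + (starRingEnd ℂ) α * β * δ₃) :=
      V_eq hww hvv hvw hwv α β (hc₃z t)
    have pinC : I * (B + (starRingEnd ℂ) B) = I * (A + (starRingEnd ℂ) A) := by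
      have h1 := P_offdiag_q hvv hwv hvw (hc₃s t) (hc₃q t)
      have h2 := M2 hΔ t hw hvv hwv hvw
      rw [h1] at h2
      exact h2
    have pinC' : B + (starRingEnd ℂ) B = A + (starRingEnd ℂ) A :=
      mul_left_cancel₀ Complex.I_ne_zero pinC
    have E1 : ((starRingEnd ℂ) α * α - (starRingEnd ℂ) β * β) * A
        + (starRingEnd ℂ) α * β * δ₁
        = ((starRingEnd ℂ) α * α - (starRingEnd ℂ) β * β) * B
        + (starRingEnd ℂ) α * β * δ₃ := by
      have h := EqA.symm.trans EqC
      exact mul_left_cancel₀ Complex.I_ne_zero h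
    have E2 := congrArg (starRingEnd ℂ) E1
    simp only [map_add, map_mul, map_sub, Complex.conj_conj, hβc, hδ₁c, hδ₃c] at E2
    simp only [hβc] at E1
    rw [hTq]
    linear_combination -E1 - E2 - ((starRingEnd ℂ) α * α - β * β) * pinC'
end Core2

section TpTq

variable {Ω : Type*} {Δ : (Ω → H →L[ℂ] H) → (Ω → H →L[ℂ] H)}

lemma Tp_eq_Tq (hΔ : Hyp Δ) (t : Ω) {w v : H} (hw : ‖w‖ = 1) (hv : ‖v‖ = 1)
    (hvw : ⟪v, w⟫ = 0) (hwv : ⟪w, v⟫ = 0) :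
    ⟪v, Δ (cst Ω (pOp v w)) t w⟫ = -I * ⟪v, Δ (cst Ω (qOp v w)) t w⟫ := by
  set α : ℂ := (1 + I) / 2 with hα
  set βr : ℝ := Real.sqrt 2 / 2 with hβr
  obtain ⟨c₁, hc₁s, hc₁z, hc₁w⟩ :=
    pair hΔ (skew_cst (skew_zOp (α•w + (βr:ℂ)•v))) (skew_cst (skew_zOp w))
  obtain ⟨h1, h2⟩ := delta1_vals hΔ t hw hv hvw hwv α βr hc₁s hc₁z hc₁w
  have hαc : (starRingEnd ℂ) α = (1 - I) / 2 := by
    rw [hα, map_div₀, map_add, map_one, Complex.conj_I, map_ofNat]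
    ring
  have hβ0 : ((βr : ℝ) : ℂ) ≠ 0 := by
    simp only [ne_eq, Complex.ofReal_eq_zero, hβr]
    positivity
  have hsum : α + (starRingEnd ℂ) α = 1 := by rw [hα, hαc]; ring
  have hdiff : α - (starRingEnd ℂ) α = I := by rw [hα, hαc]; ring
  rw [hsum, one_mul] at h1
  rw [hdiff] at h2
  have e1 : (⟪v, c₁ t v⟫ - ⟪w, c₁ t w⟫) - ⟪v, Δ (cst Ω (pOp v w)) t w⟫ = 0 :=
    (mul_eq_zero.mp h1).resolve_left hβ0
  have h2' : (I * (βr:ℂ)) * ((⟪v, c₁ t v⟫ - ⟪w, c₁ t w⟫)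
      - (-I * ⟪v, Δ (cst Ω (qOp v w)) t w⟫)) = 0 := by
    linear_combination h2
  have e2 : (⟪v, c₁ t v⟫ - ⟪w, c₁ t w⟫) - (-I * ⟪v, Δ (cst Ω (qOp v w)) t w⟫) = 0 :=
    (mul_eq_zero.mp h2').resolve_left (mul_ne_zero Complex.I_ne_zero hβ0)
  linear_combination e2 - e1

lemma vec_eq_zero_of_components {w v u : H} (hww : ⟪w,w⟫ = (1:ℂ)) (hvv : ⟪v,v⟫ = (1:ℂ))
    (hwv : ⟪w, v⟫ = 0) (hvw : ⟪v, w⟫ = 0)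
    (h1 : ⟪w, u⟫ = 0) (h2 : ⟪v, u⟫ = 0)
    (h3 : ∀ ζ : H, ‖ζ‖ = 1 → ⟪ζ, w⟫ = 0 → ⟪ζ, v⟫ = 0 → ⟪ζ, u⟫ = 0) : u = 0 := by
  have hall : ∀ ζ : H, ⟪ζ, u⟫ = 0 := by
    intro ζ
    set ζ' := ζ - ⟪w, ζ⟫ • w - ⟪v, ζ⟫ • v with hζ'
    have hζw : ⟪ζ', w⟫ = 0 := by
      rw [hζ']
      simp [inner_sub_left, inner_smul_left, hww, hvw, inner_conj_symm, -inner_self_eq_norm_sq_to_K]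
    have hζv : ⟪ζ', v⟫ = 0 := by
      rw [hζ']
      simp [inner_sub_left, inner_smul_left, hvv, hwv, inner_conj_symm, -inner_self_eq_norm_sq_to_K]
    have hζu : ⟪ζ', u⟫ = 0 := by
      rcases eq_or_ne ζ' 0 with h0 | h0
      · rw [h0, inner_zero_left]
      · have hn : ‖ζ'‖ ≠ 0 := norm_ne_zero_iff.mpr h0
        set c : ℂ := (‖ζ'‖ : ℂ)⁻¹ with hc
        have hcn : ‖c • ζ'‖ = 1 := by
          rw [norm_smul, hc, norm_inv, Complex.norm_real, Real.norm_eq_abs,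
            _root_.abs_of_nonneg (norm_nonneg ζ')]
          field_simp
        have hcw : ⟪c • ζ', w⟫ = 0 := by rw [inner_smul_left, hζw, mul_zero]
        have hcv : ⟪c • ζ', v⟫ = 0 := by rw [inner_smul_left, hζv, mul_zero]
        have := h3 (c • ζ') hcn hcw hcv
        rw [inner_smul_left] at this
        have hc0 : (starRingEnd ℂ) c ≠ 0 := by
          simp only [ne_eq, map_eq_zero, hc, inv_eq_zero, Complex.ofReal_eq_zero]
          exact hn
        rcases mul_eq_zero.mp this with h | h
        · exact absurd h hc0
        · exact h
    have hdec : ⟪ζ, u⟫ = (starRingEnd ℂ) ⟪w, ζ⟫ * ⟪w, u⟫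
        + (starRingEnd ℂ) ⟪v, ζ⟫ * ⟪v, u⟫ + ⟪ζ', u⟫ := by
      rw [hζ']
      simp only [inner_sub_left, inner_smul_left]
      ring
    rw [hdec, h1, h2, hζu]
    ring
  have := hall u
  exact inner_self_eq_zero.mp this

end TpTq

section KeyMixed

variable {Ω : Type*} {Δ : (Ω → H →L[ℂ] H) → (Ω → H →L[ℂ] H)}

lemma key_mixed (hΔ : Hyp Δ) (t : Ω) {w v : H} (hw : ‖w‖ = 1) (hv : ‖v‖ = 1)
    (hvw : ⟪v, w⟫ = 0) (hwv : ⟪w, v⟫ = 0) {α : ℂ} {βr : ℝ} (hα : α ≠ 0)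
    (hβ : ((βr:ℝ) : ℂ) ≠ 0) (hξ : ‖α • w + (βr:ℂ) • v‖ = 1) :
    eta Δ t (α • w + (βr:ℂ) • v)
      = Gfun Δ t w (α • w + (βr:ℂ) • v)
        - ⟪α • w + (βr:ℂ) • v, Gfun Δ t w (α • w + (βr:ℂ) • v)⟫ • (α • w + (βr:ℂ) • v) := by
  have hww := inner_one_of_unit hw
  have hvv := inner_one_of_unit hv
  have hβc : (starRingEnd ℂ) ((βr:ℝ) : ℂ) = ((βr:ℝ) : ℂ) := Complex.conj_ofReal βr
  set ξ : H := α • w + (βr:ℂ) • v with hξdef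
  have hnormℂ : (starRingEnd ℂ) α * α + ((βr:ℝ):ℂ) * ((βr:ℝ):ℂ) = 1 := by
    have h := inner_one_of_unit hξ
    rw [hξdef] at h
    simp only [inner_add_left, inner_add_right, inner_smul_left, inner_smul_right,
      hww, hvv, hwv, hvw, hβc] at h
    linear_combination h
  obtain ⟨c₁, hc₁s, hc₁z, hc₁w⟩ :=
    pair hΔ (skew_cst (skew_zOp ξ)) (skew_cst (skew_zOp w))
  obtain ⟨h1, h2⟩ := delta1_vals hΔ t hw hv hvw hwv α βr hc₁s (by rw [← hξdef]; exact hc₁z)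
    hc₁w
  set Bw : ℂ := ⟪w, c₁ t w⟫ with hBw
  set Bv : ℂ := ⟪v, c₁ t v⟫ with hBv
  set K : ℂ := ⟪v, eta Δ t w⟫ with hK
  set TP : ℂ := ⟪v, Δ (cst Ω (pOp v w)) t w⟫ with hTP
  have hTpTq := Tp_eq_Tq hΔ t hw hv hvw hwv
  have hS : ⟪v, Gfun Δ t w v⟫ = TP := by
    have h3 : ⟪v, Gfun Δ t w v⟫
        = 2⁻¹ * (⟪v, Δ (cst Ω (pOp v w)) t w⟫ + (-I * ⟪v, Δ (cst Ω (qOp v w)) t w⟫)) := by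
      unfold Gfun
      rw [inner_smul_right, inner_sub_right, inner_smul_right]
      ring
    rw [h3, ← hTpTq, ← hTP]
    ring
  have hδS : Bv - Bw = TP := by
    by_cases hre : α.re = 0
    · have him : α.im ≠ 0 := by
        intro him
        exact hα (Complex.ext hre him)
      have hne : α - (starRingEnd ℂ) α ≠ 0 := by
        rw [Complex.sub_conj]
        intro h0
        rcases mul_eq_zero.mp h0 with h | h
        · have h' : (2:ℝ) * α.im = 0 := by exact_mod_cast h
          exact him (by linarith)
        · exact Complex.I_ne_zero h
      have e := (mul_eq_zero.mp h2).resolve_left (mul_ne_zero hne hβ)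
      have e' : Bv - Bw = -I * ⟪v, Δ (cst Ω (qOp v w)) t w⟫ := by linear_combination e
      rw [e', ← hTpTq]
    · have hne : α + (starRingEnd ℂ) α ≠ 0 := by
        rw [Complex.add_conj]
        push_cast
        simp only [ne_eq, mul_eq_zero, Complex.ofReal_eq_zero]
        rintro (h | h)
        · norm_num at h
        · exact hre (by exact_mod_cast h)
      have e := (mul_eq_zero.mp h1).resolve_left (mul_ne_zero hne hβ)
      linear_combination e
  have hcolw := c_col_z hw (hc₁w t)
  have hcolξ := c_col_z hξ (hc₁z t)
  have k1 : ⟪w, eta Δ t w⟫ = 0 := eta_orth hΔ t hw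
  have k6 : ⟪v, c₁ t w⟫ = K := by
    rw [hcolw]
    simp [inner_add_right, inner_smul_right, hvw, hK]
  have hKc : ⟪eta Δ t w, v⟫ = (starRingEnd ℂ) K := by
    rw [hK, inner_conj_symm]
  have k7 : ⟪w, c₁ t v⟫ = -((starRingEnd ℂ) K) := by
    rw [inner_skew (hc₁s t) w v, hcolw]
    simp only [inner_add_left, inner_smul_left, hwv, hKc, mul_zero, add_zero]
  have k3 : ⟪w, Gfun Δ t w v⟫ = -((starRingEnd ℂ) K) := by
    rw [G_row_w hΔ t hw hwv, hKc]
  have hGξ : Gfun Δ t w ξ = α • eta Δ t w + ((βr:ℝ):ℂ) • Gfun Δ t w v := by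
    rw [hξdef, Gfun_add hΔ, Gfun_smul hΔ, Gfun_smul hΔ, Gfun_w hΔ]
  have hc₁ξ : c₁ t ξ = α • c₁ t w + ((βr:ℝ):ℂ) • c₁ t v := by
    rw [hξdef, map_add, map_smul, map_smul]
  have hηξ : eta Δ t ξ = c₁ t ξ - ⟪ξ, c₁ t ξ⟫ • ξ :=
    (eq_sub_iff_add_eq).mpr hcolξ.symm
  -- component along w
  have hcomp_w : ⟪w, Gfun Δ t w ξ - ⟪ξ, Gfun Δ t w ξ⟫ • ξ - eta Δ t ξ⟫ = 0 := by
    rw [hηξ]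
    simp only [inner_sub_right, inner_smul_right]
    rw [hGξ, hc₁ξ]
    rw [hξdef]
    simp only [inner_add_left, inner_add_right, inner_smul_left, inner_smul_right,
      hww, hvv, hwv, hvw, hβc, k1, k3, k6, k7, hS, ← hBw, ← hBv, ← hK]
    linear_combination (α * ((βr:ℝ):ℂ) * ((βr:ℝ):ℂ)) * hδS + (α * Bw) * hnormℂ
  -- component along v
  have hcomp_v : ⟪v, Gfun Δ t w ξ - ⟪ξ, Gfun Δ t w ξ⟫ • ξ - eta Δ t ξ⟫ = 0 := by
    rw [hηξ]
    simp only [inner_sub_right, inner_smul_right]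
    rw [hGξ, hc₁ξ]
    rw [hξdef]
    simp only [inner_add_left, inner_add_right, inner_smul_left, inner_smul_right,
      hww, hvv, hwv, hvw, hβc, k1, k3, k6, k7, hS, ← hBw, ← hBv, ← hK]
    linear_combination (-( ((βr:ℝ):ℂ)) * (1 - ((βr:ℝ):ℂ) * ((βr:ℝ):ℂ))) * hδS
      + (((βr:ℝ):ℂ) * Bw) * hnormℂ
  -- components orthogonal to the plane
  have hcomp_perp : ∀ ζ : H, ‖ζ‖ = 1 → ⟪ζ, w⟫ = 0 → ⟪ζ, v⟫ = 0 →
      ⟪ζ, Gfun Δ t w ξ - ⟪ξ, Gfun Δ t w ξ⟫ • ξ - eta Δ t ξ⟫ = 0 := by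
    intro ζ hζ hζw hζv
    have hwζ : ⟪w, ζ⟫ = 0 := by rw [← inner_conj_symm, hζw, map_zero]
    have hvζ : ⟪v, ζ⟫ = 0 := by rw [← inner_conj_symm, hζv, map_zero]
    have hζξ : ⟪ζ, ξ⟫ = 0 := by
      rw [hξdef, inner_add_right, inner_smul_right, inner_smul_right, hζw, hζv]
      ring
    have h₁ : ⟪ζ, eta Δ t ξ⟫ = -⟪eta Δ t ζ, ξ⟫ := eta_antisym hΔ t hξ hζ hζξ
    have h₂ : ⟪w, eta Δ t ζ⟫ = -⟪eta Δ t w, ζ⟫ := eta_antisym hΔ t hζ hw hwζ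
    have h₃ : ⟪v, eta Δ t ζ⟫ = -⟪eta Δ t v, ζ⟫ := eta_antisym hΔ t hζ hv hvζ
    have q2 : ⟪eta Δ t ζ, w⟫ = -⟪ζ, eta Δ t w⟫ := by
      have h := congrArg (starRingEnd ℂ) h₂
      rw [inner_conj_symm, map_neg, inner_conj_symm] at h
      exact h
    have q3 : ⟪eta Δ t ζ, v⟫ = -⟪ζ, eta Δ t v⟫ := by
      have h := congrArg (starRingEnd ℂ) h₃
      rw [inner_conj_symm, map_neg, inner_conj_symm] at h
      exact h
    have e1 : ⟪ζ, eta Δ t ξ⟫ = α * ⟪ζ, eta Δ t w⟫ + ((βr:ℝ):ℂ) * ⟪ζ, eta Δ t v⟫ := by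
      rw [h₁, hξdef]
      simp only [inner_add_right, inner_smul_right, q2, q3]
      ring
    have e2 : ⟪ζ, Gfun Δ t w v⟫ = ⟪ζ, eta Δ t v⟫ := G_row_perp hΔ t hw hv hvw hζv hζw
    simp only [inner_sub_right, inner_smul_right, hζξ, mul_zero, sub_zero]
    rw [hGξ, e1]
    simp only [inner_add_right, inner_smul_right, e2]
    ring
  have hu := vec_eq_zero_of_components hww hvv hwv hvw hcomp_w hcomp_v hcomp_perp
  have := sub_eq_zero.mp hu
  exact this.symm

end KeyMixed

section Final

variable {Ω : Type*} {Δ : (Ω → H →L[ℂ] H) → (Ω → H →L[ℂ] H)}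

lemma key_eta_G (hΔ : Hyp Δ) (t : Ω) {w : H} (hw : ‖w‖ = 1) {ξ : H} (hξ : ‖ξ‖ = 1) :
    eta Δ t ξ = Gfun Δ t w ξ - ⟪ξ, Gfun Δ t w ξ⟫ • ξ := by
  have hww := inner_one_of_unit hw
  have hξξ := inner_one_of_unit hξ
  by_cases hperp : ⟪w, ξ⟫ = 0
  · -- ξ orthogonal to w
    have hξw : ⟪ξ, w⟫ = 0 := by rw [← inner_conj_symm, hperp, map_zero]
    have comp_w : ⟪w, Gfun Δ t w ξ - ⟪ξ, Gfun Δ t w ξ⟫ • ξ - eta Δ t ξ⟫ = 0 := by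
      rw [inner_sub_right, inner_sub_right, inner_smul_right,
        G_row_w hΔ t hw hperp, hperp, eta_antisym hΔ t hξ hw hperp]
      ring
    have comp_v : ⟪ξ, Gfun Δ t w ξ - ⟪ξ, Gfun Δ t w ξ⟫ • ξ - eta Δ t ξ⟫ = 0 := by
      rw [inner_sub_right, inner_sub_right, inner_smul_right, hξξ, eta_orth hΔ t hξ]
      ring
    have comp_perp : ∀ ζ : H, ‖ζ‖ = 1 → ⟪ζ, w⟫ = 0 → ⟪ζ, ξ⟫ = 0 →
        ⟪ζ, Gfun Δ t w ξ - ⟪ξ, Gfun Δ t w ξ⟫ • ξ - eta Δ t ξ⟫ = 0 := by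
      intro ζ hζ hζw hζξ
      rw [inner_sub_right, inner_sub_right, inner_smul_right, hζξ,
        G_row_perp hΔ t hw hξ hξw hζξ hζw]
      ring
    have hu := vec_eq_zero_of_components hww hξξ hperp hξw comp_w comp_v comp_perp
    exact (sub_eq_zero.mp hu).symm
  · by_cases hβ0 : ξ - ⟪w, ξ⟫ • w = 0
    · -- ξ parallel to w
      set α : ℂ := ⟪w, ξ⟫ with hα
      have hξα : ξ = α • w := by
        have := sub_eq_zero.mp hβ0
        exact this
      have hαα : (starRingEnd ℂ) α * α = 1 := by
        have h := hξξ
        rw [hξα] at h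
        simp only [inner_smul_left, inner_smul_right, hww, mul_one] at h
        linear_combination h
      have hz : zOp ξ = zOp w := by
        rw [hξα]
        ext x
        simp only [zOp_apply, inner_smul_left, smul_smul]
        match_scalars
        linear_combination (I * ⟪w, x⟫) * hαα
      have heta : eta Δ t ξ = α • eta Δ t w := by
        unfold eta
        rw [hz]
        conv_lhs => rw [hξα]
        rw [map_smul]
        rw [smul_comm]
      have hGξ : Gfun Δ t w ξ = α • eta Δ t w := by
        conv_lhs => rw [hξα]
        rw [Gfun_smul hΔ, Gfun_w hΔ]
      rw [heta, hGξ]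
      have hs2 : ⟪ξ, α • eta Δ t w⟫ = 0 := by
        conv_lhs => rw [hξα]
        rw [inner_smul_left, inner_smul_right, eta_orth hΔ t hw]
        ring
      rw [hs2, zero_smul, sub_zero]
    · -- mixed case
      set α : ℂ := ⟪w, ξ⟫ with hα
      set ξ' : H := ξ - α • w with hξ'
      have hβr : ‖ξ'‖ ≠ 0 := norm_ne_zero_iff.mpr hβ0
      set βr : ℝ := ‖ξ'‖ with hβrdef
      set v : H := ((βr : ℂ))⁻¹ • ξ' with hvdef
      have hβℂ : ((βr:ℝ) : ℂ) ≠ 0 := by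
        simp only [ne_eq, Complex.ofReal_eq_zero]
        exact hβr
      have hv : ‖v‖ = 1 := by
        rw [hvdef, norm_smul, norm_inv, Complex.norm_real, Real.norm_eq_abs,
          _root_.abs_of_nonneg (norm_nonneg ξ')]
        field_simp
      have hwξ' : ⟪w, ξ'⟫ = 0 := by
        rw [hξ']
        simp [inner_sub_right, inner_smul_right, hww, hα, -inner_self_eq_norm_sq_to_K]
      have hwv : ⟪w, v⟫ = 0 := by
        rw [hvdef, inner_smul_right, hwξ', mul_zero]
      have hvw : ⟪v, w⟫ = 0 := by rw [← inner_conj_symm, hwv, map_zero]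
      have hdec : ξ = α • w + ((βr:ℝ):ℂ) • v := by
        rw [hvdef, smul_smul]
        rw [mul_inv_cancel₀ hβℂ, one_smul, hξ']
        abel
      have hn : ‖α • w + ((βr:ℝ):ℂ) • v‖ = 1 := by rw [← hdec]; exact hξ
      have := key_mixed hΔ t hw hv hvw hwv hperp hβℂ hn
      rw [hdec]
      exact this

lemma implement_pointwise (hΔ : Hyp Δ) {w : H} (hw : ‖w‖ = 1)
    {x : Ω → H →L[ℂ] H} (hx : ∀ t, adjoint (x t) = -(x t)) (t : Ω) :
    Δ x t = Gc hΔ t w hw * x t - x t * Gc hΔ t w hw := by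
  apply ext_of_unit_diag
  intro ξ hξ
  rw [star_id hΔ hx t hξ]
  have hkey := key_eta_G hΔ t hw hξ
  have hGξ : Gfun Δ t w ξ = eta Δ t ξ + ⟪ξ, Gfun Δ t w ξ⟫ • ξ := by
    rw [hkey]; abel
  have hconj : (starRingEnd ℂ) ⟪ξ, Gfun Δ t w ξ⟫ + ⟪ξ, Gfun Δ t w ξ⟫ = 0 := by
    have h := Gfun_skew hΔ t hw ξ ξ
    linear_combination h
  simp only [ContinuousLinearMap.sub_apply, ContinuousLinearMap.mul_apply, inner_sub_right,
    Gc_apply]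
  have h1 : ⟪ξ, Gfun Δ t w (x t ξ)⟫ = -⟪Gfun Δ t w ξ, x t ξ⟫ := by
    have := Gfun_skew' hΔ t hw ξ (x t ξ)
    linear_combination this
  rw [h1, hGξ]
  simp only [inner_add_left, inner_add_right, inner_smul_left, inner_smul_right, map_add,
    map_smul]
  linear_combination (⟪ξ, x t ξ⟫) * hconj

end Final

end TwoLocalSkew

/-- **Theorem 4.2 (Ayupov–Arzikulov–Umrzaqov).**
Let `H` be a separable infinite-dimensional complex Hilbert space (witnessed by an
orthonormal basis indexed by `ℕ`) and let `Ω` be an arbitrary set.  Every 2-local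
inner derivation `Δ` on the Lie algebra `F(Ω, B_sk(H))` of all maps from `Ω` to the
skew-adjoint bounded operators on `H` (with pointwise bracket) is an inner
derivation: there is a single `a ∈ F(Ω, B_sk(H))` with `Δ x = a x - x a` for all
`x ∈ F(Ω, B_sk(H))`. -/
theorem two_local_inner_derivation_on_skew_valued_maps_is_inner
    {H : Type*} [NormedAddCommGroup H] [InnerProductSpace ℂ H] [CompleteSpace H]
    (e : HilbertBasis ℕ ℂ H) {Ω : Type*}
    (Δ : (Ω → H →L[ℂ] H) → (Ω → H →L[ℂ] H))
    (hΔ : ∀ x y : Ω → H →L[ℂ] H,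
        (∀ t, ContinuousLinearMap.adjoint (x t) = -(x t)) →
        (∀ t, ContinuousLinearMap.adjoint (y t) = -(y t)) →
        ∃ a : Ω → H →L[ℂ] H,
          (∀ t, ContinuousLinearMap.adjoint (a t) = -(a t)) ∧
          Δ x = a * x - x * a ∧ Δ y = a * y - y * a) :
    ∃ a : Ω → H →L[ℂ] H,
      (∀ t, ContinuousLinearMap.adjoint (a t) = -(a t)) ∧
      ∀ x : Ω → H →L[ℂ] H, (∀ t, ContinuousLinearMap.adjoint (x t) = -(x t)) →
        Δ x = a * x - x * a := by
  have hw : ‖(e 0 : H)‖ = 1 := e.orthonormal.1 0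
  have hH : TwoLocalSkew.Hyp Δ := hΔ
  refine ⟨fun t => TwoLocalSkew.Gc hH t (e 0) hw,
    fun t => TwoLocalSkew.Gc_skewadj hH t (e 0) hw, ?_⟩
  intro x hx
  funext t
  exact TwoLocalSkew.implement_pointwise hH hw hx t
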